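/- Every 2-factor of the Petersen graph contains exactly two of the three edges of H, and these two edges lie in different cycles of the 2-factor. -/
import Mathlib


open SimpleGraph

/-- A 2-factor of `G`: a 2-regular spanning subgraph. -/
def IsTwoFactor {V : Type*} (G H : SimpleGraph V) : Prop :=
  H ≤ G ∧ ∀ v, (H.neighborSet v).ncard = 2

/-- A perfect matching (1-factor) of `G`: a 1-regular spanning subgraph. -/
def IsOneFactor {V : Type*} (G M : SimpleGraph V) : Prop :=
  M ≤ G ∧ ∀ v, (M.neighborSet v).ncard = 1

/-- Every cycle of `H` has odd length. -/
def AllCyclesOdd {V : Type*} (H : SimpleGraph V) : Prop :=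
  ∀ (v : V) (p : H.Walk v v), p.IsCycle → Odd p.length

/-- `G` is odd 2-factored: every cycle of every 2-factor has odd length. -/
def OddTwoFactored {V : Type*} (G : SimpleGraph V) : Prop :=
  ∀ H, IsTwoFactor G H → AllCyclesOdd H

/-- `G` has a proper edge coloring with `n` colors. -/
def EdgeColorable {V : Type*} (G : SimpleGraph V) (n : ℕ) : Prop :=
  ∃ c : Sym2 V → Fin n, ∀ e₁ ∈ G.edgeSet, ∀ e₂ ∈ G.edgeSet,
    e₁ ≠ e₂ → (∃ v, v ∈ e₁ ∧ v ∈ e₂) → c e₁ ≠ c e₂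

/-- The induced subgraph of `G` on `A` contains a cycle. -/
def HasCycleIn {V : Type*} (G : SimpleGraph V) (A : Set V) : Prop :=
  ∃ (v : A) (p : (G.induce A).Walk v v), p.IsCycle

/-- Cyclic edge-connectivity at least `k`: every edge cut separating two
cycle-containing parts has at least `k` edges. -/
def CyclicEdgeConnGe {V : Type*} (G : SimpleGraph V) (k : ℕ) : Prop :=
  ∀ A : Set V, HasCycleIn G A → HasCycleIn G Aᶜ →
    k ≤ {e ∈ G.edgeSet | ∃ x ∈ A, ∃ y ∈ Aᶜ, e = s(x, y)}.ncard

/-- A snark: connected, cubic, girth at least 5, cyclically 4-edge-connected,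
edge chromatic number 4. -/
def IsSnark {V : Type*} (G : SimpleGraph V) : Prop :=
  G.Connected ∧
  (∀ v, (G.neighborSet v).ncard = 3) ∧
  (∀ (v : V) (p : G.Walk v v), p.IsCycle → 5 ≤ p.length) ∧
  CyclicEdgeConnGe G 4 ∧
  EdgeColorable G 4 ∧ ¬ EdgeColorable G 3

/-- A bold-edge `xy` of `G`. -/
def IsBoldEdge {V : Type*} (G : SimpleGraph V) (x y : V) : Prop :=
  G.Adj x y ∧
  (∀ H, IsTwoFactor (G.induce {w | w ≠ x}) H → AllCyclesOdd H) ∧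
  (∀ H, IsTwoFactor (G.induce {w | w ≠ y}) H → AllCyclesOdd H) ∧
  (∀ H, IsTwoFactor G H → H.Adj x y → AllCyclesOdd H) ∧
  (∀ H, IsTwoFactor G H → ¬ H.Adj x y → AllCyclesOdd H)

/-- The graph `(R − {ab, cd}) + {ac, ad, bc, bd}` of condition (iv) of gadget-pairs. -/
def GadgetAux {V : Type*} (R : SimpleGraph V) (a b c d : V) : SimpleGraph V :=
  (R.deleteEdges {s(a, b), s(c, d)}) ⊔
    SimpleGraph.fromEdgeSet {s(a, c), s(a, d), s(b, c), s(b, d)}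

/-- The pair of nonadjacent edges `ab`, `cd` of `R` is a gadget-pair. -/
def IsGadgetPair {V : Type*} (R : SimpleGraph V) (a b c d : V) : Prop :=
  R.Adj a b ∧ R.Adj c d ∧ a ≠ c ∧ a ≠ d ∧ b ≠ c ∧ b ≠ d ∧
  (∀ H, IsTwoFactor R H → H.Adj a b ∨ H.Adj c d) ∧
  (∀ H, IsTwoFactor R H →
    (H.Adj a b ∧ ¬ H.Adj c d) ∨ (¬ H.Adj a b ∧ H.Adj c d) → AllCyclesOdd H) ∧
  (∀ H, IsTwoFactor R H → H.Adj a b → H.Adj c d →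
    AllCyclesOdd H ∧ ¬ H.Reachable a c) ∧
  (∀ e' ∈ ({s(a, c), s(a, d), s(b, c), s(b, d)} : Set (Sym2 V)),
    ∀ H, IsTwoFactor (GadgetAux R a b c d) H → e' ∈ H.edgeSet →
      (∀ e'' ∈ ({s(a, c), s(a, d), s(b, c), s(b, d)} : Set (Sym2 V)),
        e'' ∈ H.edgeSet → e'' = e') →
      ∀ (v : V) (p : H.Walk v v), p.IsCycle →
        (e' ∈ p.edges → Even p.length) ∧ (e' ∉ p.edges → Odd p.length))
/-- The Petersen graph, on outer vertices `Sum.inl j` and inner vertices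
`Sum.inr j` (0-based; `o_{j+1} = Sum.inl j`, `i_{j+1} = Sum.inr j`):
edges `o_j o_{j+1}`, `o_j i_j`, `i_j i_{j+2}` (indices mod 5). -/
def Petersen : SimpleGraph (Fin 5 ⊕ Fin 5) :=
  SimpleGraph.fromRel (fun p q =>
    match p, q with
    | Sum.inl i, Sum.inl j => j = i + 1
    | Sum.inr i, Sum.inr j => j = i + 2
    | Sum.inl i, Sum.inr j => i = j
    | Sum.inr _, Sum.inl _ => False)

/-- The edge set `H = {o₁i₁, i₂i₅, o₃o₄}` of the Petersen graph. -/
def PetersenH : Set (Sym2 (Fin 5 ⊕ Fin 5)) :=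
  {s(Sum.inl 0, Sum.inr 0), s(Sum.inr 1, Sum.inr 4), s(Sum.inl 2, Sum.inl 3)}

-- auxiliary definitions and lemmas
abbrev V10 := Fin 5 ⊕ Fin 5

def prAux : V10 → V10 → Prop := fun p q =>
    match p, q with
    | Sum.inl i, Sum.inl j => j = i + 1
    | Sum.inr i, Sum.inr j => j = i + 2
    | Sum.inl i, Sum.inr j => i = j
    | Sum.inr _, Sum.inl _ => False

instance : ∀ p q, Decidable (prAux p q) := fun p q => by
  cases p <;> cases q <;>
    first
      | exact inferInstanceAs (Decidable (_ = _))
      | exact inferInstanceAs (Decidable False)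

lemma petersen_eq_fromRel : Petersen = SimpleGraph.fromRel prAux := rfl

instance : DecidableRel Petersen.Adj := fun u v =>
  decidable_of_iff (u ≠ v ∧ (prAux u v ∨ prAux v u)) (by rw [petersen_eq_fromRel, fromRel_adj])

def EE : Fin 15 → Sym2 V10 :=
  ![s(.inl 0, .inl 1), s(.inl 1, .inl 2), s(.inl 2, .inl 3), s(.inl 3, .inl 4), s(.inl 4, .inl 0),
    s(.inl 0, .inr 0), s(.inl 1, .inr 1), s(.inl 2, .inr 2), s(.inl 3, .inr 3), s(.inl 4, .inr 4),
    s(.inr 0, .inr 2), s(.inr 1, .inr 3), s(.inr 2, .inr 4), s(.inr 3, .inr 0), s(.inr 4, .inr 1)]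

def GF (l : List (Sym2 V10)) : SimpleGraph V10 := SimpleGraph.fromEdgeSet {e | e ∈ l}

instance (l : List (Sym2 V10)) : DecidableRel (GF l).Adj := fun a b =>
  decidable_of_iff (s(a,b) ∈ l ∧ a ≠ b) (by rw [GF, fromEdgeSet_adj]; rfl)

lemma card2Aux {α : Type*} (s : Set α) (a b c : α) (hab : a ≠ b) (hac : a ≠ c) (hbc : b ≠ c)
    (hsub : s ⊆ {a, b, c}) (h2 : s.ncard = 2) :
    (a ∈ s ∧ b ∈ s ∧ c ∉ s) ∨ (a ∈ s ∧ c ∈ s ∧ b ∉ s) ∨ (b ∈ s ∧ c ∈ s ∧ a ∉ s) := by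
  by_cases ha : a ∈ s <;> by_cases hb : b ∈ s <;> by_cases hc : c ∈ s
  · exfalso
    have hs : s = {a, b, c} := Set.Subset.antisymm hsub (by
      intro x hx
      rcases hx with rfl | rfl | rfl <;> assumption)
    rw [hs] at h2
    rw [Set.ncard_insert_of_notMem (by simp [hab, hac]) (Set.toFinite _),
      Set.ncard_insert_of_notMem (by simp [hbc]) (Set.toFinite _), Set.ncard_singleton] at h2
    omega
  · exact Or.inl ⟨ha, hb, hc⟩
  · exact Or.inr (Or.inl ⟨ha, hc, hb⟩)
  · exfalso
    have hs : s ⊆ {a} := by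
      intro x hx
      rcases hsub hx with rfl | rfl | rfl
      · rfl
      · exact absurd hx hb
      · exact absurd hx hc
    have := Set.ncard_le_ncard hs (Set.toFinite _)
    rw [Set.ncard_singleton, h2] at this
    omega
  · exact Or.inr (Or.inr ⟨hb, hc, ha⟩)
  · exfalso
    have hs : s ⊆ {b} := by
      intro x hx
      rcases hsub hx with rfl | rfl | rfl
      · exact absurd hx ha
      · rfl
      · exact absurd hx hc
    have := Set.ncard_le_ncard hs (Set.toFinite _)
    rw [Set.ncard_singleton, h2] at this
    omega
  · exfalso
    have hs : s ⊆ {c} := by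
      intro x hx
      rcases hsub hx with rfl | rfl | rfl
      · exact absurd hx ha
      · exact absurd hx hb
      · rfl
    have := Set.ncard_le_ncard hs (Set.toFinite _)
    rw [Set.ncard_singleton, h2] at this
    omega
  · exfalso
    have hs : s ⊆ (∅ : Set α) := by
      intro x hx
      rcases hsub hx with rfl | rfl | rfl
      · exact absurd hx ha
      · exact absurd hx hb
      · exact absurd hx hc
    have := Set.ncard_le_ncard hs (Set.toFinite _)
    simp at this
    omega

lemma vtxAux (H : SimpleGraph V10) (hle : H ≤ Petersen) (v a b c : V10)
    (hnb : Petersen.neighborSet v = {a, b, c}) (hab : a ≠ b) (hac : a ≠ c) (hbc : b ≠ c)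
    (h2 : (H.neighborSet v).ncard = 2) (ea eb ec : Sym2 V10)
    (hea : s(v, a) = ea) (heb : s(v, b) = eb) (hec : s(v, c) = ec) :
    (ea ∈ H.edgeSet ∧ eb ∈ H.edgeSet ∧ ec ∉ H.edgeSet) ∨
    (ea ∈ H.edgeSet ∧ ec ∈ H.edgeSet ∧ eb ∉ H.edgeSet) ∨
    (eb ∈ H.edgeSet ∧ ec ∈ H.edgeSet ∧ ea ∉ H.edgeSet) := by
  subst hea heb hec
  have hsub : H.neighborSet v ⊆ {a, b, c} := by
    intro u hu
    rw [← hnb]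
    exact hle hu
  have := card2Aux _ a b c hab hac hbc hsub h2
  simpa only [SimpleGraph.mem_neighborSet, ← SimpleGraph.mem_edgeSet] using this

lemma EE_surj : ∀ e ∈ Petersen.edgeSet, ∃ i : Fin 15, e = EE i := by
  intro e
  induction e using Sym2.ind with
  | _ x y =>
    rw [SimpleGraph.mem_edgeSet]
    revert x y
    decide

lemma eq_GF (H : SimpleGraph V10) (hle : H ≤ Petersen) (l : List (Sym2 V10))
    (hsel : ∀ e ∈ l, e ∈ H.edgeSet)
    (hmiss : ∀ i : Fin 15, EE i ∉ l → EE i ∉ H.edgeSet) :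
    H = GF l := by
  rw [← SimpleGraph.edgeSet_inj]
  ext e
  constructor
  · intro he
    obtain ⟨i, rfl⟩ := EE_surj e (SimpleGraph.edgeSet_mono hle he)
    by_cases hi : EE i ∈ l
    · rw [GF, SimpleGraph.edgeSet_fromEdgeSet]
      exact ⟨hi, H.not_isDiag_of_mem_edgeSet he⟩
    · exact absurd he (hmiss i hi)
  · intro he
    rw [GF, SimpleGraph.edgeSet_fromEdgeSet] at he
    exact hsel e he.1

lemma walk_inv {W : Type*} {G : SimpleGraph W} (A : W → Prop)
    (h : ∀ x y, G.Adj x y → (A x ↔ A y)) {u v : W} (w : G.Walk u v) : A u → A v := by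
  induction w with
  | nil => exact id
  | cons hadj _ ih => exact fun hu => ih ((h _ _ hadj).mp hu)

lemma not_reach {W : Type*} {G : SimpleGraph W} (A : W → Prop)
    (h : ∀ x y, G.Adj x y → (A x ↔ A y)) {u v : W} (hu : A u) (hv : ¬ A v) :
    ¬ G.Reachable u v :=
  fun hr => hv (hr.elim fun w => walk_inv A h w hu)

def LL0 : List (Sym2 V10) := [EE 0, EE 2, EE 4, EE 6, EE 7, EE 8, EE 9, EE 10, EE 13, EE 14]
def AA0 : Finset V10 := {.inl 0, .inl 1, .inl 4, .inr 1, .inr 4}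

set_option maxHeartbeats 1000000 in
lemma caseAux0 (H : SimpleGraph V10) (hle : H ≤ Petersen)
    (h0 : EE 0 ∈ H.edgeSet) (h1 : EE 1 ∉ H.edgeSet) (h2 : EE 2 ∈ H.edgeSet) (h3 : EE 3 ∉ H.edgeSet) (h4 : EE 4 ∈ H.edgeSet)
    (h5 : EE 5 ∉ H.edgeSet) (h6 : EE 6 ∈ H.edgeSet) (h7 : EE 7 ∈ H.edgeSet) (h8 : EE 8 ∈ H.edgeSet) (h9 : EE 9 ∈ H.edgeSet)
    (h10 : EE 10 ∈ H.edgeSet) (h11 : EE 11 ∉ H.edgeSet) (h12 : EE 12 ∉ H.edgeSet) (h13 : EE 13 ∈ H.edgeSet) (h14 : EE 14 ∈ H.edgeSet) :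
    (PetersenH ∩ H.edgeSet).ncard = 2 ∧
      (∀ a b c d : Fin 5 ⊕ Fin 5,
        s(a, b) ∈ PetersenH → s(c, d) ∈ PetersenH →
        s(a, b) ∈ H.edgeSet → s(c, d) ∈ H.edgeSet → s(a, b) ≠ s(c, d) →
        ¬ H.Reachable a c) := by
  have hEq : H = GF LL0 := by
    apply eq_GF H hle
    · intro e he
      simp only [LL0, List.mem_cons, List.not_mem_nil, or_false] at he
      rcases he with rfl|rfl|rfl|rfl|rfl|rfl|rfl|rfl|rfl|rfl <;> assumption
    · intro i hi
      fin_cases i <;> first | assumption | exact absurd (by decide) hi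
  subst hEq
  constructor
  · have hI : PetersenH ∩ (GF LL0).edgeSet = {EE 14, EE 2} := by
      ext e
      simp only [PetersenH, Set.mem_inter_iff, Set.mem_insert_iff, Set.mem_singleton_iff]
      revert e
      decide
    rw [hI]
    exact Set.ncard_pair (by decide)
  · intro a b c d ha hc hae hce hne
    simp only [PetersenH, Set.mem_insert_iff, Set.mem_singleton_iff] at ha hc
    have key : ∀ x y u v : V10,
        (s(x,y) = s(Sum.inl 0, Sum.inr 0) ∨ s(x,y) = s(Sum.inr 1, Sum.inr 4) ∨ s(x,y) = s(Sum.inl 2, Sum.inl 3)) →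
        (s(u,v) = s(Sum.inl 0, Sum.inr 0) ∨ s(u,v) = s(Sum.inr 1, Sum.inr 4) ∨ s(u,v) = s(Sum.inl 2, Sum.inl 3)) →
        s(x,y) ∈ (GF LL0).edgeSet → s(u,v) ∈ (GF LL0).edgeSet → s(x,y) ≠ s(u,v) →
        ((x ∈ AA0 ∧ u ∉ AA0) ∨ (u ∈ AA0 ∧ x ∉ AA0)) := by
      set_option synthInstance.maxSize 2000 in decide
    have hinv : ∀ x y : V10, (GF LL0).Adj x y → ((x ∈ AA0) ↔ (y ∈ AA0)) := by decide
    rcases key a b c d ha hc hae hce hne with ⟨hx, hu⟩ | ⟨hu, hx⟩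
    · exact not_reach (· ∈ AA0) hinv hx hu
    · exact fun hr => (not_reach (· ∈ AA0) hinv hu hx) hr.symm

def LL1 : List (Sym2 V10) := [EE 0, EE 1, EE 3, EE 5, EE 7, EE 8, EE 9, EE 10, EE 11, EE 14]
def AA1 : Finset V10 := {.inl 0, .inl 1, .inl 2, .inr 0, .inr 2}

set_option maxHeartbeats 1000000 in
lemma caseAux1 (H : SimpleGraph V10) (hle : H ≤ Petersen)
    (h0 : EE 0 ∈ H.edgeSet) (h1 : EE 1 ∈ H.edgeSet) (h2 : EE 2 ∉ H.edgeSet) (h3 : EE 3 ∈ H.edgeSet) (h4 : EE 4 ∉ H.edgeSet)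
    (h5 : EE 5 ∈ H.edgeSet) (h6 : EE 6 ∉ H.edgeSet) (h7 : EE 7 ∈ H.edgeSet) (h8 : EE 8 ∈ H.edgeSet) (h9 : EE 9 ∈ H.edgeSet)
    (h10 : EE 10 ∈ H.edgeSet) (h11 : EE 11 ∈ H.edgeSet) (h12 : EE 12 ∉ H.edgeSet) (h13 : EE 13 ∉ H.edgeSet) (h14 : EE 14 ∈ H.edgeSet) :
    (PetersenH ∩ H.edgeSet).ncard = 2 ∧
      (∀ a b c d : Fin 5 ⊕ Fin 5,
        s(a, b) ∈ PetersenH → s(c, d) ∈ PetersenH →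
        s(a, b) ∈ H.edgeSet → s(c, d) ∈ H.edgeSet → s(a, b) ≠ s(c, d) →
        ¬ H.Reachable a c) := by
  have hEq : H = GF LL1 := by
    apply eq_GF H hle
    · intro e he
      simp only [LL1, List.mem_cons, List.not_mem_nil, or_false] at he
      rcases he with rfl|rfl|rfl|rfl|rfl|rfl|rfl|rfl|rfl|rfl <;> assumption
    · intro i hi
      fin_cases i <;> first | assumption | exact absurd (by decide) hi
  subst hEq
  constructor
  · have hI : PetersenH ∩ (GF LL1).edgeSet = {EE 5, EE 14} := by
      ext e
      simp only [PetersenH, Set.mem_inter_iff, Set.mem_insert_iff, Set.mem_singleton_iff]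
      revert e
      decide
    rw [hI]
    exact Set.ncard_pair (by decide)
  · intro a b c d ha hc hae hce hne
    simp only [PetersenH, Set.mem_insert_iff, Set.mem_singleton_iff] at ha hc
    have key : ∀ x y u v : V10,
        (s(x,y) = s(Sum.inl 0, Sum.inr 0) ∨ s(x,y) = s(Sum.inr 1, Sum.inr 4) ∨ s(x,y) = s(Sum.inl 2, Sum.inl 3)) →
        (s(u,v) = s(Sum.inl 0, Sum.inr 0) ∨ s(u,v) = s(Sum.inr 1, Sum.inr 4) ∨ s(u,v) = s(Sum.inl 2, Sum.inl 3)) →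
        s(x,y) ∈ (GF LL1).edgeSet → s(u,v) ∈ (GF LL1).edgeSet → s(x,y) ≠ s(u,v) →
        ((x ∈ AA1 ∧ u ∉ AA1) ∨ (u ∈ AA1 ∧ x ∉ AA1)) := by
      set_option synthInstance.maxSize 2000 in decide
    have hinv : ∀ x y : V10, (GF LL1).Adj x y → ((x ∈ AA1) ↔ (y ∈ AA1)) := by decide
    rcases key a b c d ha hc hae hce hne with ⟨hx, hu⟩ | ⟨hu, hx⟩
    · exact not_reach (· ∈ AA1) hinv hx hu
    · exact fun hr => (not_reach (· ∈ AA1) hinv hu hx) hr.symm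

def LL2 : List (Sym2 V10) := [EE 1, EE 2, EE 4, EE 5, EE 6, EE 8, EE 9, EE 10, EE 11, EE 12]
def AA2 : Finset V10 := {.inl 0, .inl 4, .inr 0, .inr 2, .inr 4}

set_option maxHeartbeats 1000000 in
lemma caseAux2 (H : SimpleGraph V10) (hle : H ≤ Petersen)
    (h0 : EE 0 ∉ H.edgeSet) (h1 : EE 1 ∈ H.edgeSet) (h2 : EE 2 ∈ H.edgeSet) (h3 : EE 3 ∉ H.edgeSet) (h4 : EE 4 ∈ H.edgeSet)
    (h5 : EE 5 ∈ H.edgeSet) (h6 : EE 6 ∈ H.edgeSet) (h7 : EE 7 ∉ H.edgeSet) (h8 : EE 8 ∈ H.edgeSet) (h9 : EE 9 ∈ H.edgeSet)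
    (h10 : EE 10 ∈ H.edgeSet) (h11 : EE 11 ∈ H.edgeSet) (h12 : EE 12 ∈ H.edgeSet) (h13 : EE 13 ∉ H.edgeSet) (h14 : EE 14 ∉ H.edgeSet) :
    (PetersenH ∩ H.edgeSet).ncard = 2 ∧
      (∀ a b c d : Fin 5 ⊕ Fin 5,
        s(a, b) ∈ PetersenH → s(c, d) ∈ PetersenH →
        s(a, b) ∈ H.edgeSet → s(c, d) ∈ H.edgeSet → s(a, b) ≠ s(c, d) →
        ¬ H.Reachable a c) := by
  have hEq : H = GF LL2 := by
    apply eq_GF H hle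
    · intro e he
      simp only [LL2, List.mem_cons, List.not_mem_nil, or_false] at he
      rcases he with rfl|rfl|rfl|rfl|rfl|rfl|rfl|rfl|rfl|rfl <;> assumption
    · intro i hi
      fin_cases i <;> first | assumption | exact absurd (by decide) hi
  subst hEq
  constructor
  · have hI : PetersenH ∩ (GF LL2).edgeSet = {EE 5, EE 2} := by
      ext e
      simp only [PetersenH, Set.mem_inter_iff, Set.mem_insert_iff, Set.mem_singleton_iff]
      revert e
      decide
    rw [hI]
    exact Set.ncard_pair (by decide)
  · intro a b c d ha hc hae hce hne
    simp only [PetersenH, Set.mem_insert_iff, Set.mem_singleton_iff] at ha hc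
    have key : ∀ x y u v : V10,
        (s(x,y) = s(Sum.inl 0, Sum.inr 0) ∨ s(x,y) = s(Sum.inr 1, Sum.inr 4) ∨ s(x,y) = s(Sum.inl 2, Sum.inl 3)) →
        (s(u,v) = s(Sum.inl 0, Sum.inr 0) ∨ s(u,v) = s(Sum.inr 1, Sum.inr 4) ∨ s(u,v) = s(Sum.inl 2, Sum.inl 3)) →
        s(x,y) ∈ (GF LL2).edgeSet → s(u,v) ∈ (GF LL2).edgeSet → s(x,y) ≠ s(u,v) →
        ((x ∈ AA2 ∧ u ∉ AA2) ∨ (u ∈ AA2 ∧ x ∉ AA2)) := by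
      set_option synthInstance.maxSize 2000 in decide
    have hinv : ∀ x y : V10, (GF LL2).Adj x y → ((x ∈ AA2) ↔ (y ∈ AA2)) := by decide
    rcases key a b c d ha hc hae hce hne with ⟨hx, hu⟩ | ⟨hu, hx⟩
    · exact not_reach (· ∈ AA2) hinv hx hu
    · exact fun hr => (not_reach (· ∈ AA2) hinv hu hx) hr.symm

def LL3 : List (Sym2 V10) := [EE 0, EE 2, EE 3, EE 5, EE 6, EE 7, EE 9, EE 11, EE 12, EE 13]
def AA3 : Finset V10 := {.inl 0, .inl 1, .inr 0, .inr 1, .inr 3}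

set_option maxHeartbeats 1000000 in
lemma caseAux3 (H : SimpleGraph V10) (hle : H ≤ Petersen)
    (h0 : EE 0 ∈ H.edgeSet) (h1 : EE 1 ∉ H.edgeSet) (h2 : EE 2 ∈ H.edgeSet) (h3 : EE 3 ∈ H.edgeSet) (h4 : EE 4 ∉ H.edgeSet)
    (h5 : EE 5 ∈ H.edgeSet) (h6 : EE 6 ∈ H.edgeSet) (h7 : EE 7 ∈ H.edgeSet) (h8 : EE 8 ∉ H.edgeSet) (h9 : EE 9 ∈ H.edgeSet)
    (h10 : EE 10 ∉ H.edgeSet) (h11 : EE 11 ∈ H.edgeSet) (h12 : EE 12 ∈ H.edgeSet) (h13 : EE 13 ∈ H.edgeSet) (h14 : EE 14 ∉ H.edgeSet) :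
    (PetersenH ∩ H.edgeSet).ncard = 2 ∧
      (∀ a b c d : Fin 5 ⊕ Fin 5,
        s(a, b) ∈ PetersenH → s(c, d) ∈ PetersenH →
        s(a, b) ∈ H.edgeSet → s(c, d) ∈ H.edgeSet → s(a, b) ≠ s(c, d) →
        ¬ H.Reachable a c) := by
  have hEq : H = GF LL3 := by
    apply eq_GF H hle
    · intro e he
      simp only [LL3, List.mem_cons, List.not_mem_nil, or_false] at he
      rcases he with rfl|rfl|rfl|rfl|rfl|rfl|rfl|rfl|rfl|rfl <;> assumption
    · intro i hi
      fin_cases i <;> first | assumption | exact absurd (by decide) hi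
  subst hEq
  constructor
  · have hI : PetersenH ∩ (GF LL3).edgeSet = {EE 5, EE 2} := by
      ext e
      simp only [PetersenH, Set.mem_inter_iff, Set.mem_insert_iff, Set.mem_singleton_iff]
      revert e
      decide
    rw [hI]
    exact Set.ncard_pair (by decide)
  · intro a b c d ha hc hae hce hne
    simp only [PetersenH, Set.mem_insert_iff, Set.mem_singleton_iff] at ha hc
    have key : ∀ x y u v : V10,
        (s(x,y) = s(Sum.inl 0, Sum.inr 0) ∨ s(x,y) = s(Sum.inr 1, Sum.inr 4) ∨ s(x,y) = s(Sum.inl 2, Sum.inl 3)) →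
        (s(u,v) = s(Sum.inl 0, Sum.inr 0) ∨ s(u,v) = s(Sum.inr 1, Sum.inr 4) ∨ s(u,v) = s(Sum.inl 2, Sum.inl 3)) →
        s(x,y) ∈ (GF LL3).edgeSet → s(u,v) ∈ (GF LL3).edgeSet → s(x,y) ≠ s(u,v) →
        ((x ∈ AA3 ∧ u ∉ AA3) ∨ (u ∈ AA3 ∧ x ∉ AA3)) := by
      set_option synthInstance.maxSize 2000 in decide
    have hinv : ∀ x y : V10, (GF LL3).Adj x y → ((x ∈ AA3) ↔ (y ∈ AA3)) := by decide
    rcases key a b c d ha hc hae hce hne with ⟨hx, hu⟩ | ⟨hu, hx⟩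
    · exact not_reach (· ∈ AA3) hinv hx hu
    · exact fun hr => (not_reach (· ∈ AA3) hinv hu hx) hr.symm

def LL4 : List (Sym2 V10) := [EE 1, EE 3, EE 4, EE 5, EE 6, EE 7, EE 8, EE 12, EE 13, EE 14]
def AA4 : Finset V10 := {.inl 0, .inl 3, .inl 4, .inr 0, .inr 3}

set_option maxHeartbeats 1000000 in
lemma caseAux4 (H : SimpleGraph V10) (hle : H ≤ Petersen)
    (h0 : EE 0 ∉ H.edgeSet) (h1 : EE 1 ∈ H.edgeSet) (h2 : EE 2 ∉ H.edgeSet) (h3 : EE 3 ∈ H.edgeSet) (h4 : EE 4 ∈ H.edgeSet)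
    (h5 : EE 5 ∈ H.edgeSet) (h6 : EE 6 ∈ H.edgeSet) (h7 : EE 7 ∈ H.edgeSet) (h8 : EE 8 ∈ H.edgeSet) (h9 : EE 9 ∉ H.edgeSet)
    (h10 : EE 10 ∉ H.edgeSet) (h11 : EE 11 ∉ H.edgeSet) (h12 : EE 12 ∈ H.edgeSet) (h13 : EE 13 ∈ H.edgeSet) (h14 : EE 14 ∈ H.edgeSet) :
    (PetersenH ∩ H.edgeSet).ncard = 2 ∧
      (∀ a b c d : Fin 5 ⊕ Fin 5,
        s(a, b) ∈ PetersenH → s(c, d) ∈ PetersenH →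
        s(a, b) ∈ H.edgeSet → s(c, d) ∈ H.edgeSet → s(a, b) ≠ s(c, d) →
        ¬ H.Reachable a c) := by
  have hEq : H = GF LL4 := by
    apply eq_GF H hle
    · intro e he
      simp only [LL4, List.mem_cons, List.not_mem_nil, or_false] at he
      rcases he with rfl|rfl|rfl|rfl|rfl|rfl|rfl|rfl|rfl|rfl <;> assumption
    · intro i hi
      fin_cases i <;> first | assumption | exact absurd (by decide) hi
  subst hEq
  constructor
  · have hI : PetersenH ∩ (GF LL4).edgeSet = {EE 5, EE 14} := by
      ext e
      simp only [PetersenH, Set.mem_inter_iff, Set.mem_insert_iff, Set.mem_singleton_iff]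
      revert e
      decide
    rw [hI]
    exact Set.ncard_pair (by decide)
  · intro a b c d ha hc hae hce hne
    simp only [PetersenH, Set.mem_insert_iff, Set.mem_singleton_iff] at ha hc
    have key : ∀ x y u v : V10,
        (s(x,y) = s(Sum.inl 0, Sum.inr 0) ∨ s(x,y) = s(Sum.inr 1, Sum.inr 4) ∨ s(x,y) = s(Sum.inl 2, Sum.inl 3)) →
        (s(u,v) = s(Sum.inl 0, Sum.inr 0) ∨ s(u,v) = s(Sum.inr 1, Sum.inr 4) ∨ s(u,v) = s(Sum.inl 2, Sum.inl 3)) →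
        s(x,y) ∈ (GF LL4).edgeSet → s(u,v) ∈ (GF LL4).edgeSet → s(x,y) ≠ s(u,v) →
        ((x ∈ AA4 ∧ u ∉ AA4) ∨ (u ∈ AA4 ∧ x ∉ AA4)) := by
      set_option synthInstance.maxSize 2000 in decide
    have hinv : ∀ x y : V10, (GF LL4).Adj x y → ((x ∈ AA4) ↔ (y ∈ AA4)) := by decide
    rcases key a b c d ha hc hae hce hne with ⟨hx, hu⟩ | ⟨hu, hx⟩
    · exact not_reach (· ∈ AA4) hinv hx hu
    · exact fun hr => (not_reach (· ∈ AA4) hinv hu hx) hr.symm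

def LL5 : List (Sym2 V10) := [EE 0, EE 1, EE 2, EE 3, EE 4, EE 10, EE 11, EE 12, EE 13, EE 14]
def AA5 : Finset V10 := {.inl 0, .inl 1, .inl 2, .inl 3, .inl 4}

set_option maxHeartbeats 1000000 in
lemma caseAux5 (H : SimpleGraph V10) (hle : H ≤ Petersen)
    (h0 : EE 0 ∈ H.edgeSet) (h1 : EE 1 ∈ H.edgeSet) (h2 : EE 2 ∈ H.edgeSet) (h3 : EE 3 ∈ H.edgeSet) (h4 : EE 4 ∈ H.edgeSet)
    (h5 : EE 5 ∉ H.edgeSet) (h6 : EE 6 ∉ H.edgeSet) (h7 : EE 7 ∉ H.edgeSet) (h8 : EE 8 ∉ H.edgeSet) (h9 : EE 9 ∉ H.edgeSet)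
    (h10 : EE 10 ∈ H.edgeSet) (h11 : EE 11 ∈ H.edgeSet) (h12 : EE 12 ∈ H.edgeSet) (h13 : EE 13 ∈ H.edgeSet) (h14 : EE 14 ∈ H.edgeSet) :
    (PetersenH ∩ H.edgeSet).ncard = 2 ∧
      (∀ a b c d : Fin 5 ⊕ Fin 5,
        s(a, b) ∈ PetersenH → s(c, d) ∈ PetersenH →
        s(a, b) ∈ H.edgeSet → s(c, d) ∈ H.edgeSet → s(a, b) ≠ s(c, d) →
        ¬ H.Reachable a c) := by
  have hEq : H = GF LL5 := by
    apply eq_GF H hle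
    · intro e he
      simp only [LL5, List.mem_cons, List.not_mem_nil, or_false] at he
      rcases he with rfl|rfl|rfl|rfl|rfl|rfl|rfl|rfl|rfl|rfl <;> assumption
    · intro i hi
      fin_cases i <;> first | assumption | exact absurd (by decide) hi
  subst hEq
  constructor
  · have hI : PetersenH ∩ (GF LL5).edgeSet = {EE 14, EE 2} := by
      ext e
      simp only [PetersenH, Set.mem_inter_iff, Set.mem_insert_iff, Set.mem_singleton_iff]
      revert e
      decide
    rw [hI]
    exact Set.ncard_pair (by decide)
  · intro a b c d ha hc hae hce hne
    simp only [PetersenH, Set.mem_insert_iff, Set.mem_singleton_iff] at ha hc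
    have key : ∀ x y u v : V10,
        (s(x,y) = s(Sum.inl 0, Sum.inr 0) ∨ s(x,y) = s(Sum.inr 1, Sum.inr 4) ∨ s(x,y) = s(Sum.inl 2, Sum.inl 3)) →
        (s(u,v) = s(Sum.inl 0, Sum.inr 0) ∨ s(u,v) = s(Sum.inr 1, Sum.inr 4) ∨ s(u,v) = s(Sum.inl 2, Sum.inl 3)) →
        s(x,y) ∈ (GF LL5).edgeSet → s(u,v) ∈ (GF LL5).edgeSet → s(x,y) ≠ s(u,v) →
        ((x ∈ AA5 ∧ u ∉ AA5) ∨ (u ∈ AA5 ∧ x ∉ AA5)) := by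
      set_option synthInstance.maxSize 2000 in decide
    have hinv : ∀ x y : V10, (GF LL5).Adj x y → ((x ∈ AA5) ↔ (y ∈ AA5)) := by decide
    rcases key a b c d ha hc hae hce hne with ⟨hx, hu⟩ | ⟨hu, hx⟩
    · exact not_reach (· ∈ AA5) hinv hx hu
    · exact fun hr => (not_reach (· ∈ AA5) hinv hu hx) hr.symm

set_option maxHeartbeats 2000000 in
/-- Every 2-factor of the Petersen graph contains exactly two
of the three edges of `H`, and these two edges lie in different cycles of the
2-factor (their endvertices are not connected in the 2-factor). -/
theorem petersen_twoFactor_meets_H_in_two_edges_different_cycles :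
    ∀ H, IsTwoFactor Petersen H →
      (PetersenH ∩ H.edgeSet).ncard = 2 ∧
      (∀ a b c d : Fin 5 ⊕ Fin 5,
        s(a, b) ∈ PetersenH → s(c, d) ∈ PetersenH →
        s(a, b) ∈ H.edgeSet → s(c, d) ∈ H.edgeSet → s(a, b) ≠ s(c, d) →
        ¬ H.Reachable a c) := by
  intro H hH
  obtain ⟨hle, hdeg⟩ := hH
  have t0 := vtxAux H hle (Sum.inl 0) (Sum.inl 1) (Sum.inl 4) (Sum.inr 0)
    (by ext u; simp only [SimpleGraph.mem_neighborSet, Set.mem_insert_iff, Set.mem_singleton_iff]; revert u; decide)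
    (by decide) (by decide) (by decide) (hdeg _) (EE 0) (EE 4) (EE 5) (by decide) (by decide) (by decide)
  have t1 := vtxAux H hle (Sum.inl 1) (Sum.inl 0) (Sum.inl 2) (Sum.inr 1)
    (by ext u; simp only [SimpleGraph.mem_neighborSet, Set.mem_insert_iff, Set.mem_singleton_iff]; revert u; decide)
    (by decide) (by decide) (by decide) (hdeg _) (EE 0) (EE 1) (EE 6) (by decide) (by decide) (by decide)
  have t2 := vtxAux H hle (Sum.inl 2) (Sum.inl 1) (Sum.inl 3) (Sum.inr 2)
    (by ext u; simp only [SimpleGraph.mem_neighborSet, Set.mem_insert_iff, Set.mem_singleton_iff]; revert u; decide)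
    (by decide) (by decide) (by decide) (hdeg _) (EE 1) (EE 2) (EE 7) (by decide) (by decide) (by decide)
  have t3 := vtxAux H hle (Sum.inl 3) (Sum.inl 2) (Sum.inl 4) (Sum.inr 3)
    (by ext u; simp only [SimpleGraph.mem_neighborSet, Set.mem_insert_iff, Set.mem_singleton_iff]; revert u; decide)
    (by decide) (by decide) (by decide) (hdeg _) (EE 2) (EE 3) (EE 8) (by decide) (by decide) (by decide)
  have t4 := vtxAux H hle (Sum.inl 4) (Sum.inl 3) (Sum.inl 0) (Sum.inr 4)
    (by ext u; simp only [SimpleGraph.mem_neighborSet, Set.mem_insert_iff, Set.mem_singleton_iff]; revert u; decide)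
    (by decide) (by decide) (by decide) (hdeg _) (EE 3) (EE 4) (EE 9) (by decide) (by decide) (by decide)
  have t5 := vtxAux H hle (Sum.inr 0) (Sum.inl 0) (Sum.inr 2) (Sum.inr 3)
    (by ext u; simp only [SimpleGraph.mem_neighborSet, Set.mem_insert_iff, Set.mem_singleton_iff]; revert u; decide)
    (by decide) (by decide) (by decide) (hdeg _) (EE 5) (EE 10) (EE 13) (by decide) (by decide) (by decide)
  have t6 := vtxAux H hle (Sum.inr 1) (Sum.inl 1) (Sum.inr 3) (Sum.inr 4)
    (by ext u; simp only [SimpleGraph.mem_neighborSet, Set.mem_insert_iff, Set.mem_singleton_iff]; revert u; decide)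
    (by decide) (by decide) (by decide) (hdeg _) (EE 6) (EE 11) (EE 14) (by decide) (by decide) (by decide)
  have t7 := vtxAux H hle (Sum.inr 2) (Sum.inl 2) (Sum.inr 0) (Sum.inr 4)
    (by ext u; simp only [SimpleGraph.mem_neighborSet, Set.mem_insert_iff, Set.mem_singleton_iff]; revert u; decide)
    (by decide) (by decide) (by decide) (hdeg _) (EE 7) (EE 10) (EE 12) (by decide) (by decide) (by decide)
  have t8 := vtxAux H hle (Sum.inr 3) (Sum.inl 3) (Sum.inr 1) (Sum.inr 0)
    (by ext u; simp only [SimpleGraph.mem_neighborSet, Set.mem_insert_iff, Set.mem_singleton_iff]; revert u; decide)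
    (by decide) (by decide) (by decide) (hdeg _) (EE 8) (EE 11) (EE 13) (by decide) (by decide) (by decide)
  have t9 := vtxAux H hle (Sum.inr 4) (Sum.inl 4) (Sum.inr 2) (Sum.inr 1)
    (by ext u; simp only [SimpleGraph.mem_neighborSet, Set.mem_insert_iff, Set.mem_singleton_iff]; revert u; decide)
    (by decide) (by decide) (by decide) (hdeg _) (EE 9) (EE 12) (EE 14) (by decide) (by decide) (by decide)
  rcases t0 with ⟨E0p, E4p, E5n⟩ | ⟨E0p, E5p, E4n⟩ | ⟨E4p, E5p, E0n⟩
  all_goals rcases t1 with ⟨E0p, E1p, E6n⟩ | ⟨E0p, E6p, E1n⟩ | ⟨E1p, E6p, E0n⟩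
  all_goals try contradiction
  all_goals rcases t2 with ⟨E1p, E2p, E7n⟩ | ⟨E1p, E7p, E2n⟩ | ⟨E2p, E7p, E1n⟩
  all_goals try contradiction
  all_goals rcases t3 with ⟨E2p, E3p, E8n⟩ | ⟨E2p, E8p, E3n⟩ | ⟨E3p, E8p, E2n⟩
  all_goals try contradiction
  all_goals rcases t4 with ⟨E3p, E4p, E9n⟩ | ⟨E3p, E9p, E4n⟩ | ⟨E4p, E9p, E3n⟩
  all_goals try contradiction
  all_goals rcases t5 with ⟨E5p, E10p, E13n⟩ | ⟨E5p, E13p, E10n⟩ | ⟨E10p, E13p, E5n⟩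
  all_goals try contradiction
  all_goals rcases t6 with ⟨E6p, E11p, E14n⟩ | ⟨E6p, E14p, E11n⟩ | ⟨E11p, E14p, E6n⟩
  all_goals try contradiction
  all_goals rcases t7 with ⟨E7p, E10p, E12n⟩ | ⟨E7p, E12p, E10n⟩ | ⟨E10p, E12p, E7n⟩
  all_goals try contradiction
  all_goals rcases t8 with ⟨E8p, E11p, E13n⟩ | ⟨E8p, E13p, E11n⟩ | ⟨E11p, E13p, E8n⟩
  all_goals try contradiction
  all_goals rcases t9 with ⟨E9p, E12p, E14n⟩ | ⟨E9p, E14p, E12n⟩ | ⟨E12p, E14p, E9n⟩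
  all_goals try contradiction
  all_goals first
    | exact caseAux0 H hle E0p E1n E2p E3n E4p E5n E6p E7p E8p E9p E10p E11n E12n E13p E14p
    | exact caseAux1 H hle E0p E1p E2n E3p E4n E5p E6n E7p E8p E9p E10p E11p E12n E13n E14p
    | exact caseAux2 H hle E0n E1p E2p E3n E4p E5p E6p E7n E8p E9p E10p E11p E12p E13n E14n
    | exact caseAux3 H hle E0p E1n E2p E3p E4n E5p E6p E7p E8n E9p E10n E11p E12p E13p E14n
    | exact caseAux4 H hle E0n E1p E2n E3p E4p E5p E6p E7p E8p E9n E10n E11n E12p E13p E14p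
    | exact caseAux5 H hle E0p E1p E2p E3p E4p E5n E6n E7n E8n E9n E10p E11p E12p E13p E14p
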